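/- arXiv:2509.09088 — 5 statements merged into one kernel-verified Lean document; each statement's English description precedes it below -/
import Mathlib

section
/- Let h be the (N-1)×(N-1) symmetric tridiagonal matrix with diagonal entries λ_k² + λ_l² and off-diagonal entries -λ_k λ_l, where λ_k, λ_l are positive reals with λ_k ≠ λ_l. Then det h = (λ_k^{2N} - λ_l^{2N})/(λ_k² - λ_l²). -/
open Matrix

/-- The `(N-1) × (N-1)` symmetric tridiagonal matrix with diagonal entries `a`
and off-diagonal entries `b`. -/
def tridiag (n : ℕ) (a b : ℝ) : Matrix (Fin n) (Fin n) ℝ :=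
  Matrix.of fun i j =>
    if (i : ℕ) = (j : ℕ) then a
    else if (i : ℕ) + 1 = (j : ℕ) ∨ (j : ℕ) + 1 = (i : ℕ) then b
    else 0

/-!
Let `Dₙ = det (tridiag n a b)`. With `a = x + y` and `b² = x y`, expanding along the first row gives the recurrence
`Dₙ₊₂ = (x + y) Dₙ₊₁ - x y Dₙ`, whose characteristic roots are `x` and `y`; hence
`Dₙ (x - y) = xⁿ⁺¹ - yⁿ⁺¹`. Take `x = λ_k²`, `y = λ_l²`, `b = -λ_k λ_l`.
-/

theorem tridiag_submatrix_succ_succ (n : ℕ) (a b : ℝ) :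
    (tridiag (n + 1) a b).submatrix Fin.succ Fin.succ = tridiag n a b := by
  ext i j
  simp only [tridiag, submatrix_apply, of_apply, Fin.val_succ]
  split_ifs <;> first | rfl | omega

/-- The minor of the `(0, 1)` entry: its first column is `(b, 0, …, 0)`. -/
theorem det_tridiag_submatrix_succ_succAbove_one (n : ℕ) (a b : ℝ) :
    ((tridiag (n + 2) a b).submatrix Fin.succ (Fin.succAbove 1)).det =
      b * (tridiag n a b).det := by
  have hcorner : tridiag (n + 2) a b (Fin.succ 0) 0 = b := by simp [tridiag]
  have hcol : ∀ i : Fin n, tridiag (n + 2) a b i.succ.succ 0 = 0 := fun i => by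
    simp [tridiag]
  have hminor : ((tridiag (n + 2) a b).submatrix Fin.succ (Fin.succAbove 1)).submatrix
      Fin.succ Fin.succ = tridiag n a b := by
    ext i j
    simp only [submatrix_apply, Fin.one_succAbove_succ, tridiag, of_apply, Fin.val_succ]
    split_ifs <;> first | rfl | omega
  rw [det_succ_column_zero, Fin.sum_univ_succ]
  simp only [submatrix_apply, Fin.one_succAbove_zero, hcorner, hcol, hminor, Fin.succAbove_zero,
    Fin.val_zero, pow_zero, one_mul, mul_zero, zero_mul, Finset.sum_const_zero, add_zero]

theorem det_tridiag_succ_succ (n : ℕ) (a b : ℝ) :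
    (tridiag (n + 2) a b).det = a * (tridiag (n + 1) a b).det - b ^ 2 * (tridiag n a b).det := by
  have hdiag : tridiag (n + 2) a b 0 0 = a := by simp [tridiag]
  have hsuper : tridiag (n + 2) a b 0 1 = b := by simp [tridiag]
  have hrow : ∀ j : Fin n, tridiag (n + 2) a b 0 j.succ.succ = 0 := fun j => by
    simp [tridiag]
  rw [det_succ_row_zero, Fin.sum_univ_succ, Fin.sum_univ_succ]
  simp only [hrow, Fin.succAbove_zero, tridiag_submatrix_succ_succ, mul_zero, zero_mul,
    Finset.sum_const_zero, add_zero]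
  rw [show (Fin.succ 0 : Fin (n + 2)) = 1 from rfl, det_tridiag_submatrix_succ_succAbove_one,
    hdiag, hsuper]
  simp only [Fin.val_zero, Fin.val_one, pow_zero, pow_one]
  ring

theorem det_tridiag_add_mul_sub {x y b : ℝ} (hb : b ^ 2 = x * y) (n : ℕ) :
    (tridiag n (x + y) b).det * (x - y) = x ^ (n + 1) - y ^ (n + 1) := by
  induction n using Nat.twoStepInduction with
  | zero => simp
  | one => simp [tridiag]; ring
  | more n ih₀ ih₁ =>
    rw [det_tridiag_succ_succ, hb]
    linear_combination (x + y) * ih₁ - x * y * ih₀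

/-- The determinant of the tridiagonal matrix with diagonal `λk² + λl²` and
off-diagonal `-λk·λl` equals `(λk^{2N} - λl^{2N}) / (λk² - λl²)`. -/
theorem det_tridiag_dln (N : ℕ) (hN : 2 ≤ N) (lk ll : ℝ)
    (hk : 0 < lk) (hl : 0 < ll) (hne : lk ≠ ll) :
    (tridiag (N - 1) (lk ^ 2 + ll ^ 2) (-(lk * ll))).det =
      (lk ^ (2 * N) - ll ^ (2 * N)) / (lk ^ 2 - ll ^ 2) := by
  have hsq : lk ^ 2 - ll ^ 2 ≠ 0 := by
    rw [sub_ne_zero]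
    exact fun h => hne ((pow_left_inj₀ hk.le hl.le two_ne_zero).mp h)
  obtain ⟨n, rfl⟩ : ∃ n, N = n + 1 := ⟨N - 1, by omega⟩
  rw [eq_div_iff hsq, Nat.add_sub_cancel, pow_mul, pow_mul]
  exact det_tridiag_add_mul_sub (by ring) n
end

section
/- With h̃ as above and b_p = λ_k^{N-p} λ_l^p (p = 0,…,N), the vectors a (a_p = λ_k^p λ_l^{N-p}) and b satisfy bᵀ h̃ a = 0; i.e., a and b are orthogonal with respect to the quadratic form defined by h̃. -/
open Matrix

/-- The `(N+1)×(N+1)` symmetric tridiagonal matrix (indexed by `0,…,N`) with corner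
diagonal entries `a/2`, interior diagonal entries `a`, and off-diagonal entries `b`. -/
noncomputable def tridiagBdry (N : ℕ) (a b : ℝ) : Matrix (Fin (N + 1)) (Fin (N + 1)) ℝ :=
  Matrix.of fun i j =>
    if (i : ℕ) = (j : ℕ) then (if (i : ℕ) = 0 ∨ (i : ℕ) = N then a / 2 else a)
    else if (i : ℕ) + 1 = (j : ℕ) ∨ (j : ℕ) + 1 = (i : ℕ) then b
    else 0

namespace TridiagAux

open Finset

/-- Double sum with a superdiagonal indicator collapses to a single sum. -/
lemma sumU (N : ℕ) (f : ℕ → ℕ → ℝ) :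
    ∑ i ∈ range (N+1), ∑ j ∈ range (N+1), (if i + 1 = j then f i j else 0)
      = ∑ i ∈ range N, f i (i+1) := by
  have h1 : ∀ i ∈ range (N+1),
      (∑ j ∈ range (N+1), (if i + 1 = j then f i j else 0)) =
        if i ∈ range N then f i (i+1) else 0 := by
    intro i _
    rw [Finset.sum_ite_eq]
    simp [Finset.mem_range]
  rw [Finset.sum_congr rfl h1, Finset.sum_ite_mem]
  congr 1
  ext x; simp [Finset.mem_range]

/-- Double sum with a subdiagonal indicator collapses to a single sum. -/
lemma sumL (N : ℕ) (f : ℕ → ℕ → ℝ) :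
    ∑ i ∈ range (N+1), ∑ j ∈ range (N+1), (if j + 1 = i then f i j else 0)
      = ∑ j ∈ range N, f (j+1) j := by
  rw [Finset.sum_comm]
  exact sumU N (fun j i => f i j)

/-- Double sum with a diagonal indicator collapses to a single sum. -/
lemma sumD (N : ℕ) (f : ℕ → ℕ → ℝ) :
    ∑ i ∈ range (N+1), ∑ j ∈ range (N+1), (if i = j then f i j else 0)
      = ∑ i ∈ range (N+1), f i i := by
  refine Finset.sum_congr rfl fun i hi => ?_
  rw [Finset.sum_ite_eq, if_pos hi]

/-- Sum of the diagonal entries (with halved corners) times a constant. -/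
lemma sumDiag (N : ℕ) (hN : 2 ≤ N) (A K : ℝ) :
    ∑ i ∈ range (N+1), ((if i = 0 ∨ i = N then A/2 else A) * K) = N * (A * K) := by
  have h : ∀ i ∈ range (N+1), (if i = 0 ∨ i = N then A/2 else A) * K
      = A * K - ((if i = 0 then A/2 else 0) + (if i = N then A/2 else 0)) * K := by
    intro i _
    split_ifs <;> first | (exfalso; omega) | ring
  rw [Finset.sum_congr rfl h, Finset.sum_sub_distrib, Finset.sum_const]
  simp only [add_mul, Finset.sum_add_distrib, ite_mul, zero_mul]
  rw [Finset.sum_ite_eq', Finset.sum_ite_eq']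
  simp only [Finset.mem_range, Nat.lt_succ_iff, Nat.zero_le, le_refl, if_pos, if_true,
    Finset.card_range, nsmul_eq_mul]
  push_cast
  ring

/-- Splitting the tridiagonal entry into diagonal, superdiagonal and subdiagonal parts. -/
lemma Hsplit (N : ℕ) (A C : ℝ) (i j : ℕ) :
    (if i = j then (if i = 0 ∨ i = N then A/2 else A)
      else if i + 1 = j ∨ j + 1 = i then C else 0)
    = (if i = j then (if i = 0 ∨ i = N then A/2 else A) else 0)
      + ((if i + 1 = j then C else 0) + (if j + 1 = i then C else 0)) := by
  split_ifs <;> first | (exfalso; omega) | ring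

/-- The key computation over `ℕ`-indexed sums. -/
lemma key (N : ℕ) (hN : 2 ≤ N) (lk ll : ℝ) :
    ∑ i ∈ Finset.range (N+1), (lk ^ (N - i) * ll ^ i *
      ∑ j ∈ Finset.range (N+1),
        (if i = j then (if i = 0 ∨ i = N then (lk^2+ll^2)/2 else lk^2+ll^2)
         else if i + 1 = j ∨ j + 1 = i then -(lk*ll) else 0) * (lk ^ j * ll ^ (N - j))) = 0 := by
  simp only [Finset.mul_sum, Hsplit, add_mul, ite_mul, zero_mul, mul_add, mul_ite, mul_zero,
    Finset.sum_add_distrib]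
  rw [sumD, sumU, sumL]
  have h1 : ∀ i ∈ range (N+1),
      (if i = 0 ∨ i = N then lk ^ (N - i) * ll ^ i * ((lk ^ 2 + ll ^ 2) / 2 * (lk ^ i * ll ^ (N - i)))
        else lk ^ (N - i) * ll ^ i * (lk ^ 2 * (lk ^ i * ll ^ (N - i))) +
          lk ^ (N - i) * ll ^ i * (ll ^ 2 * (lk ^ i * ll ^ (N - i))))
      = (if i = 0 ∨ i = N then (lk^2+ll^2)/2 else lk^2+ll^2) * (lk ^ N * ll ^ N) := by
    intro i hi
    simp only [Finset.mem_range, Nat.lt_succ_iff] at hi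
    have e1 : lk ^ (N - i) * lk ^ i = lk ^ N := by rw [← pow_add]; congr 1; omega
    have e2 : ll ^ (N - i) * ll ^ i = ll ^ N := by rw [← pow_add]; congr 1; omega
    split_ifs <;> (rw [← e1, ← e2]; ring)
  have h2 : ∀ i ∈ range N,
      lk ^ (N - i) * ll ^ i * (-(lk*ll) * (lk ^ (i+1) * ll ^ (N - (i+1))))
      = lk ^ (N+1) * ll ^ (N-1) * (-(lk*ll)) := by
    intro i hi
    simp only [Finset.mem_range] at hi
    have e1 : lk ^ (N - i) * lk ^ (i+1) = lk ^ (N+1) := by rw [← pow_add]; congr 1; omega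
    have e2 : ll ^ i * ll ^ (N - (i+1)) = ll ^ (N-1) := by rw [← pow_add]; congr 1; omega
    rw [← e1, ← e2]; ring
  have h3 : ∀ j ∈ range N,
      lk ^ (N - (j+1)) * ll ^ (j+1) * (-(lk*ll) * (lk ^ j * ll ^ (N - j)))
      = lk ^ (N-1) * ll ^ (N+1) * (-(lk*ll)) := by
    intro j hj
    simp only [Finset.mem_range] at hj
    have e1 : lk ^ (N - (j+1)) * lk ^ j = lk ^ (N-1) := by rw [← pow_add]; congr 1; omega
    have e2 : ll ^ (j+1) * ll ^ (N - j) = ll ^ (N+1) := by rw [← pow_add]; congr 1; omega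
    rw [← e1, ← e2]; ring
  rw [Finset.sum_congr rfl h1, Finset.sum_congr rfl h2, Finset.sum_congr rfl h3,
    sumDiag N hN, Finset.sum_const, Finset.sum_const, Finset.card_range, nsmul_eq_mul,
    nsmul_eq_mul]
  have hN1 : N - 1 + 1 = N := by omega
  rw [← hN1]
  simp only [pow_succ]
  push_cast
  ring

end TridiagAux

/-- The vectors `a_p = λk^p λl^{N-p}` and `b_p = λk^{N-p} λl^p` are orthogonal with
respect to the quadratic form defined by `h̃`: `bᵀ h̃ a = 0`. -/
theorem tridiagBdry_geom_orthogonal (N : ℕ) (hN : 2 ≤ N) (lk ll : ℝ)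
    (hk : 0 < lk) (hl : 0 < ll) (hne : lk ≠ ll) :
    (fun p : Fin (N + 1) => lk ^ (N - (p : ℕ)) * ll ^ (p : ℕ)) ⬝ᵥ
      (tridiagBdry N (lk ^ 2 + ll ^ 2) (-(lk * ll))).mulVec
        (fun p : Fin (N + 1) => lk ^ (p : ℕ) * ll ^ (N - (p : ℕ))) = 0 := by
  have h1 : ∀ i : Fin (N+1),
      (tridiagBdry N (lk ^ 2 + ll ^ 2) (-(lk * ll))).mulVec
        (fun p : Fin (N + 1) => lk ^ (p : ℕ) * ll ^ (N - (p : ℕ))) i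
      = ∑ j ∈ Finset.range (N+1),
        (if (i:ℕ) = j then (if (i:ℕ) = 0 ∨ (i:ℕ) = N then (lk^2+ll^2)/2 else lk^2+ll^2)
         else if (i:ℕ) + 1 = j ∨ j + 1 = (i:ℕ) then -(lk*ll) else 0) * (lk ^ j * ll ^ (N - j)) := by
    intro i
    rw [Matrix.mulVec, dotProduct]
    exact Fin.sum_univ_eq_sum_range (fun j =>
      (if (i:ℕ) = j then (if (i:ℕ) = 0 ∨ (i:ℕ) = N then (lk^2+ll^2)/2 else lk^2+ll^2)
       else if (i:ℕ) + 1 = j ∨ j + 1 = (i:ℕ) then -(lk*ll) else 0) * (lk ^ j * ll ^ (N - j))) _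
  rw [dotProduct]
  simp only [h1]
  rw [Fin.sum_univ_eq_sum_range (fun i => lk ^ (N - i) * ll ^ i *
      ∑ j ∈ Finset.range (N+1),
        (if i = j then (if i = 0 ∨ i = N then (lk^2+ll^2)/2 else lk^2+ll^2)
         else if i + 1 = j ∨ j + 1 = i then -(lk*ll) else 0) * (lk ^ j * ll ^ (N - j))) _]
  exact TridiagAux.key N hN lk ll
end

section
/- Suppose W ∈ (M_d(ℝ))^N satisfies the balance equations W_{p+1}ᵀ W_{p+1} = W_p W_pᵀ for p = 1,…,N-1. Then all the matrices W_1,…,W_N have the same singular values (i.e., W_pᵀW_p and W_qᵀW_q have the same characteristic polynomial for all p, q). -/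
open Matrix

theorem eq_of_succ_eq_on_Icc {α : Type*} {f : ℕ → α} {a b : ℕ}
    (hsucc : ∀ p, a ≤ p → p + 1 ≤ b → f (p + 1) = f p) :
    ∀ p q, a ≤ p → p ≤ b → a ≤ q → q ≤ b → f p = f q := by
  have eq_base : ∀ p, a ≤ p → p ≤ b → f p = f a := by
    intro p hp
    induction p, hp using Nat.le_induction with
    | base => exact fun _ => rfl
    | succ p hp ih => exact fun hpb => (hsucc p hp hpb).trans (ih (by omega))
  intro p q hp hpb hq hqb
  rw [eq_base p hp hpb, eq_base q hq hqb]

/-- If `W_{p+1}ᵀ W_{p+1} = W_p W_pᵀ` for `p = 1,…,N-1`, then all the matrices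
`W_1,…,W_N` have the same singular values: the characteristic polynomials of
`W_pᵀ W_p` agree for all `p`. -/
theorem balanced_same_singular_values (N d : ℕ)
    (W : ℕ → Matrix (Fin d) (Fin d) ℝ)
    (hbal : ∀ p, 1 ≤ p → p + 1 ≤ N → (W (p + 1))ᵀ * W (p + 1) = W p * (W p)ᵀ) :
    ∀ p q, 1 ≤ p → p ≤ N → 1 ≤ q → q ≤ N →
      ((W p)ᵀ * W p).charpoly = ((W q)ᵀ * W q).charpoly :=
  eq_of_succ_eq_on_Icc fun p hp hpN => by rw [hbal p hp hpN, charpoly_mul_comm]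
end

section
/- Conversely, every tuple W = (W_N,…,W_1) of d×d real matrices satisfying W_{p+1}ᵀW_{p+1} = W_p W_pᵀ for p = 1,…,N-1, with each W_p invertible, can be written as W_p = Q_p Λ Q_{p-1}ᵀ for some diagonal Λ with nonnegative entries and orthogonal matrices Q_0,…,Q_N. -/
open Matrix

/-- Every tuple of invertible matrices satisfying the balance equations
`W_{p+1}ᵀ W_{p+1} = W_p W_pᵀ` can be written as `W_p = Q_p Λ Q_{p-1}ᵀ` with `Λ`
diagonal with nonnegative entries and `Q_0,…,Q_N` orthogonal. -/
theorem svd_param_of_balanced (N d : ℕ)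
    (W : ℕ → Matrix (Fin d) (Fin d) ℝ)
    (hinv : ∀ p, 1 ≤ p → p ≤ N → IsUnit (W p))
    (hbal : ∀ p, 1 ≤ p → p + 1 ≤ N → (W (p + 1))ᵀ * W (p + 1) = W p * (W p)ᵀ) :
    ∃ (lam : Fin d → ℝ) (Q : ℕ → Matrix (Fin d) (Fin d) ℝ),
      (∀ i, 0 ≤ lam i) ∧
      (∀ p, p ≤ N → (Q p)ᵀ * Q p = 1) ∧
      (∀ p, 1 ≤ p → p ≤ N → W p = Q p * Matrix.diagonal lam * (Q (p - 1))ᵀ) := by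
  rcases Nat.eq_zero_or_pos N with hN0 | hN
  · subst hN0
    refine ⟨fun _ => 0, fun _ => 1, fun i => le_refl 0, ?_, ?_⟩
    · intro p hp; simp
    · intro p hp1 hp0; omega
  -- main case : N ≥ 1
  have hA : (W 1 * (W 1)ᵀ).IsHermitian := by
    have := Matrix.isHermitian_mul_conjTranspose_self (W 1)
    rwa [Matrix.conjTranspose_eq_transpose_of_trivial] at this
  set μ : Fin d → ℝ := hA.eigenvalues with hμdef
  set U : Matrix (Fin d) (Fin d) ℝ := (hA.eigenvectorUnitary : Matrix (Fin d) (Fin d) ℝ)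
    with hUdef
  have hstarU : star U = Uᵀ := by
    rw [Matrix.star_eq_conjTranspose, Matrix.conjTranspose_eq_transpose_of_trivial]
  have hUort : Uᵀ * U = 1 := by
    have h := Matrix.mem_unitaryGroup_iff'.mp hA.eigenvectorUnitary.2
    rwa [← hUdef, hstarU] at h
  have hUort' : U * Uᵀ = 1 := mul_eq_one_comm.mp hUort
  have hspec : W 1 * (W 1)ᵀ = U * Matrix.diagonal μ * Uᵀ := by
    have h := hA.spectral_theorem
    rw [Unitary.conjStarAlgAut_apply, ← hUdef] at h
    rwa [hstarU, RCLike.ofReal_real_eq_id, Function.id_comp] at h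
  -- eigenvalues are nonnegative
  have hμ0 : ∀ i, 0 ≤ μ i := by
    intro i
    have hPSD : (W 1 * (W 1)ᵀ).PosSemidef :=
      Matrix.conjTranspose_eq_transpose_of_trivial (W 1) ▸
        Matrix.posSemidef_self_mul_conjTranspose (W 1)
    exact hPSD.eigenvalues_nonneg i
  -- eigenvalues are nonzero
  have hμne : ∀ i, μ i ≠ 0 := by
    have hdet : Matrix.det (W 1 * (W 1)ᵀ) ≠ 0 := by
      have h1 : IsUnit (W 1) := hinv 1 le_rfl hN
      have h1d : (W 1).det ≠ 0 := ((Matrix.isUnit_iff_isUnit_det _).mp h1).ne_zero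
      rw [Matrix.det_mul, Matrix.det_transpose]
      exact mul_ne_zero h1d h1d
    have hprod : Matrix.det (W 1 * (W 1)ᵀ) = ∏ i, μ i := by
      have := hA.det_eq_prod_eigenvalues
      simpa using this
    rw [hprod] at hdet
    intro i
    exact Finset.prod_ne_zero_iff.mp hdet i (Finset.mem_univ i)
  set lam : Fin d → ℝ := fun i => Real.sqrt (μ i) with hlamdef
  have hlam0 : ∀ i, 0 ≤ lam i := fun i => Real.sqrt_nonneg _
  have hlamne : ∀ i, lam i ≠ 0 := by
    intro i
    exact ne_of_gt (Real.sqrt_pos.mpr (lt_of_le_of_ne (hμ0 i) (Ne.symm (hμne i))))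
  set Λ : Matrix (Fin d) (Fin d) ℝ := Matrix.diagonal lam with hΛdef
  set Λi : Matrix (Fin d) (Fin d) ℝ := Matrix.diagonal (fun i => (lam i)⁻¹) with hΛidef
  have hΛΛ : Λ * Λ = Matrix.diagonal μ := by
    rw [hΛdef, Matrix.diagonal_mul_diagonal]
    have : (fun i => lam i * lam i) = μ := funext fun i => Real.mul_self_sqrt (hμ0 i)
    rw [this]
  have hΛΛi : Λ * Λi = 1 := by
    rw [hΛdef, hΛidef, Matrix.diagonal_mul_diagonal]
    have : (fun i => lam i * (lam i)⁻¹) = fun _ => (1 : ℝ) :=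
      funext fun i => mul_inv_cancel₀ (hlamne i)
    rw [this, Matrix.diagonal_one]
  have hΛiΛ : Λi * Λ = 1 := mul_eq_one_comm.mp hΛΛi
  have hΛiT : Λiᵀ = Λi := Matrix.diagonal_transpose _
  have hΛT : Λᵀ = Λ := Matrix.diagonal_transpose _
  -- sandwich helper lemmas (right-associated)
  have hcU : ∀ Y : Matrix (Fin d) (Fin d) ℝ, Uᵀ * (U * Y) = Y := fun Y => by
    rw [← Matrix.mul_assoc, hUort, Matrix.one_mul]
  have hcU' : ∀ Y : Matrix (Fin d) (Fin d) ℝ, U * (Uᵀ * Y) = Y := fun Y => by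
    rw [← Matrix.mul_assoc, hUort', Matrix.one_mul]
  have hcΛ : ∀ Y : Matrix (Fin d) (Fin d) ℝ, Λ * (Λi * Y) = Y := fun Y => by
    rw [← Matrix.mul_assoc, hΛΛi, Matrix.one_mul]
  have hcΛ' : ∀ Y : Matrix (Fin d) (Fin d) ℝ, Λi * (Λ * Y) = Y := fun Y => by
    rw [← Matrix.mul_assoc, hΛiΛ, Matrix.one_mul]
  have hcD : ∀ Y : Matrix (Fin d) (Fin d) ℝ, Matrix.diagonal μ * Y = Λ * (Λ * Y) := fun Y => by
    rw [← Matrix.mul_assoc, hΛΛ]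
  have hDtail : Λi * (Matrix.diagonal μ * Λi) = 1 := by
    rw [hcD, hΛΛi, Matrix.mul_one, hΛiΛ]
  have hDmid : ∀ Y : Matrix (Fin d) (Fin d) ℝ,
      Λi * (Matrix.diagonal μ * (Λi * Y)) = Y := fun Y => by
    rw [hcD, hcΛ, hcΛ']
  have hcW : ∀ Y : Matrix (Fin d) (Fin d) ℝ,
      W 1 * ((W 1)ᵀ * Y) = U * (Matrix.diagonal μ * (Uᵀ * Y)) := fun Y => by
    rw [← Matrix.mul_assoc, hspec]
    simp only [Matrix.mul_assoc]
  -- define Q recursively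
  let Q : ℕ → Matrix (Fin d) (Fin d) ℝ := fun p =>
    Nat.rec ((W 1)ᵀ * U * Λi) (fun p Qp => W (p + 1) * Qp * Λi) p
  have hQ0 : Q 0 = (W 1)ᵀ * U * Λi := rfl
  have hQs : ∀ p, Q (p + 1) = W (p + 1) * Q p * Λi := fun p => rfl
  -- the key invariant
  have claim : ∀ p, p ≤ N → (Q p)ᵀ * Q p = 1 ∧
      (p < N → (W (p + 1))ᵀ * W (p + 1) = Q p * Matrix.diagonal μ * (Q p)ᵀ) := by
    intro p
    induction p with
    | zero =>
      intro _
      constructor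
      · rw [hQ0]
        simp only [Matrix.transpose_mul, Matrix.transpose_transpose, hΛiT, Matrix.mul_assoc]
        rw [hcW, hcU, hcU, hDtail]
      · intro _
        rw [hQ0]
        simp only [Matrix.transpose_mul, Matrix.transpose_transpose, hΛiT, Matrix.mul_assoc]
        rw [hDmid, hcU']
    | succ q ih =>
      intro hq
      obtain ⟨ho, hw⟩ := ih (Nat.le_of_succ_le hq)
      have hWW := hw (Nat.lt_of_succ_le hq)
      have ho' : Q q * (Q q)ᵀ = 1 := mul_eq_one_comm.mp ho
      have hcQ : ∀ Y : Matrix (Fin d) (Fin d) ℝ, (Q q)ᵀ * (Q q * Y) = Y := fun Y => by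
        rw [← Matrix.mul_assoc, ho, Matrix.one_mul]
      have hcQ' : ∀ Y : Matrix (Fin d) (Fin d) ℝ, Q q * ((Q q)ᵀ * Y) = Y := fun Y => by
        rw [← Matrix.mul_assoc, ho', Matrix.one_mul]
      have hcWW : ∀ Y : Matrix (Fin d) (Fin d) ℝ,
          (W (q + 1))ᵀ * (W (q + 1) * Y) = Q q * (Matrix.diagonal μ * ((Q q)ᵀ * Y)) := fun Y => by
        rw [← Matrix.mul_assoc, hWW]
        simp only [Matrix.mul_assoc]
      constructor
      · rw [hQs]
        simp only [Matrix.transpose_mul, Matrix.transpose_transpose, hΛiT, Matrix.mul_assoc]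
        rw [hcWW, hcQ, hcQ, hDtail]
      · intro hlt
        rw [hbal (q + 1) (Nat.le_add_left 1 q) (Nat.succ_le_of_lt hlt), hQs]
        simp only [Matrix.transpose_mul, Matrix.transpose_transpose, hΛiT, Matrix.mul_assoc]
        rw [hDmid, hcQ']
  refine ⟨lam, Q, hlam0, fun p hp => (claim p hp).1, ?_⟩
  intro p hp1 hpN
  cases p with
  | zero => omega
  | succ q =>
    have ho' : Q q * (Q q)ᵀ = 1 :=
      mul_eq_one_comm.mp (claim q (Nat.le_of_succ_le hpN)).1
    simp only [Nat.add_sub_cancel]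
    rw [hQs]
    simp only [Matrix.mul_assoc]
    rw [hcΛ', ho', Matrix.mul_one]
end

section
/- Let E : M_d(ℝ) → ℝ be C¹ and consider the gradient flow Ẇ_p = -(W_N⋯W_{p+1})ᵀ dE(X) (W_{p-1}⋯W_1)ᵀ where X = W_N⋯W_1. Then for each p, the quantity G_p(t) = W_{p+1}(t)ᵀ W_{p+1}(t) - W_p(t) W_p(t)ᵀ is constant in time: d/dt G_p(t) = 0. -/
open Matrix

/-- The partial product `A_{p+1}(t) = W_N(t) ⋯ W_{p+1}(t)` (with `Aprod N = 1`). -/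
def Aprod (d : ℕ) (W : ℕ → ℝ → Matrix (Fin d) (Fin d) ℝ) (N p : ℕ) (t : ℝ) :
    Matrix (Fin d) (Fin d) ℝ :=
  ((List.range (N - p)).map (fun q => W (N - q) t)).prod

/-- The partial product `B_p(t) = W_p(t) ⋯ W_1(t)` (with `Bprod 0 = 1`). -/
def Bprod (d : ℕ) (W : ℕ → ℝ → Matrix (Fin d) (Fin d) ℝ) (p : ℕ) (t : ℝ) :
    Matrix (Fin d) (Fin d) ℝ :=
  ((List.range p).map (fun q => W (p - q) t)).prod

lemma Aprod_succ (d : ℕ) (W : ℕ → ℝ → Matrix (Fin d) (Fin d) ℝ) (N p : ℕ)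
    (h : p + 1 ≤ N) (t : ℝ) :
    Aprod d W N p t = Aprod d W N (p + 1) t * W (p + 1) t := by
  unfold Aprod
  have h1 : N - p = (N - (p + 1)) + 1 := by omega
  have h2 : N - (N - (p + 1)) = p + 1 := by omega
  rw [h1, List.range_succ, List.map_append, List.prod_append]
  simp [h2]

lemma Bprod_succ (d : ℕ) (W : ℕ → ℝ → Matrix (Fin d) (Fin d) ℝ) (p : ℕ) (t : ℝ) :
    Bprod d W (p + 1) t = W (p + 1) t * Bprod d W p t := by
  unfold Bprod
  rw [List.range_succ_eq_map]
  simp only [List.map_cons, List.map_map, List.prod_cons, Nat.sub_zero]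
  congr 1
  apply congrArg
  apply List.map_congr_left
  intro q hq
  have h : p + 1 - (q + 1) = p - q := by omega
  simp [Nat.succ_eq_add_one, h]

lemma hasDerivAt_matrix_mul {d : ℕ} {M N : ℝ → Matrix (Fin d) (Fin d) ℝ}
    {M' N' : Matrix (Fin d) (Fin d) ℝ} {t : ℝ}
    (hM : ∀ i j, HasDerivAt (fun s => M s i j) (M' i j) t)
    (hN : ∀ i j, HasDerivAt (fun s => N s i j) (N' i j) t) :
    ∀ i j, HasDerivAt (fun s => (M s * N s) i j) ((M' * N t + M t * N') i j) t := by
  intro i j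
  simp only [Matrix.mul_apply, Matrix.add_apply]
  rw [← Finset.sum_add_distrib]
  exact HasDerivAt.fun_sum fun k _ => (hM i k).mul (hN k j)

/-- Along the gradient flow `Ẇ_p = -(W_N⋯W_{p+1})ᵀ dE(X) (W_{p-1}⋯W_1)ᵀ`
(where `X = W_N⋯W_1` and `dE` is the derivative matrix of the loss `E`), the
quantities `G_p = W_{p+1}ᵀ W_{p+1} - W_p W_pᵀ` are conserved: every entry of
`G_p(t)` has zero time derivative. -/
theorem balance_conserved (N d : ℕ) (I : Set ℝ)
    (dE : Matrix (Fin d) (Fin d) ℝ → Matrix (Fin d) (Fin d) ℝ)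
    (W : ℕ → ℝ → Matrix (Fin d) (Fin d) ℝ)
    (hODE : ∀ p, 1 ≤ p → p ≤ N → ∀ t ∈ I, ∀ i j,
      HasDerivAt (fun s => W p s i j)
        ((-( (Aprod d W N p t)ᵀ * dE (Bprod d W N t) * (Bprod d W (p - 1) t)ᵀ)) i j) t) :
    ∀ p, 1 ≤ p → p + 1 ≤ N → ∀ t ∈ I, ∀ i j,
      HasDerivAt
        (fun s => ((W (p + 1) s)ᵀ * W (p + 1) s - W p s * (W p s)ᵀ) i j) 0 t := by
  intro p hp hpN t ht i j
  set D := dE (Bprod d W N t) with hD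
  set Ap := Aprod d W N p t with hAp
  set Aq := Aprod d W N (p + 1) t with hAq
  set Bp := Bprod d W p t with hBp
  set Bm := Bprod d W (p - 1) t with hBm
  set Wp' : Matrix (Fin d) (Fin d) ℝ := -(Apᵀ * D * Bmᵀ) with hWp'
  set Wq' : Matrix (Fin d) (Fin d) ℝ := -(Aqᵀ * D * Bpᵀ) with hWq'
  have hdp : ∀ i j, HasDerivAt (fun s => W p s i j) (Wp' i j) t :=
    hODE p hp (by omega) t ht
  have hdq : ∀ i j, HasDerivAt (fun s => W (p + 1) s i j) (Wq' i j) t := by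
    have := hODE (p + 1) (by omega) hpN t ht
    simp only [Nat.add_sub_cancel] at this; exact this
  have hdpT : ∀ i j, HasDerivAt (fun s => (W p s)ᵀ i j) (Wp'ᵀ i j) t := by
    intro i j; exact hdp j i
  have hdqT : ∀ i j, HasDerivAt (fun s => (W (p + 1) s)ᵀ i j) (Wq'ᵀ i j) t := by
    intro i j; exact hdq j i
  have h1 := hasDerivAt_matrix_mul hdqT hdq i j
  have h2 := hasDerivAt_matrix_mul hdp hdpT i j
  have key := (h1.sub h2)
  have hAB : Ap = Aq * W (p + 1) t := Aprod_succ d W N p hpN t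
  have hBB : Bp = W p t * Bm := by
    have : p = (p - 1) + 1 := by omega
    rw [hBp, hBm, this]
    exact Bprod_succ d W (p - 1) t
  have hzero :
      (Wq'ᵀ * W (p + 1) t + (W (p + 1) t)ᵀ * Wq') i j -
        (Wp' * (W p t)ᵀ + W p t * Wp'ᵀ) i j = 0 := by
    have : Wq'ᵀ * W (p + 1) t + (W (p + 1) t)ᵀ * Wq' =
        Wp' * (W p t)ᵀ + W p t * Wp'ᵀ := by
      rw [hWp', hWq', hAB, hBB]
      simp only [Matrix.transpose_neg, Matrix.transpose_mul, Matrix.transpose_transpose,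
        Matrix.neg_mul, Matrix.mul_neg]
      noncomm_ring
    rw [this]; ring
  rw [hzero] at key
  exact key
end
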